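/- arXiv:2207.03158 — 3 statements merged into one kernel-verified Lean document; each statement's English description precedes it below -/
import Mathlib

section
/- Let A be a left brace satisfying A^s = 0 for some positive integer s (i.e. A is left nilpotent of index s). For a, b ∈ A define d_0 = a, d_0' = b, d_{i+1} = d_i + d_i', d_{i+1}' = d_i * d_i'. Then for every c ∈ A: (a + b) * c = a * c + b * c + Σ_{i=0}^{2s} (−1)^{i+1} ((d_i * d_i') * c − d_i * (d_i' * c)). -/
/-- A left brace: an abelian group `(A,+)` together with a group operation `circ`
(whose identity is `0`) satisfying `a ∘ (b + c) + a = a ∘ b + a ∘ c`. -/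
structure LeftBrace (A : Type*) [AddCommGroup A] where
  circ : A → A → A
  inv : A → A
  circ_assoc : ∀ a b c, circ (circ a b) c = circ a (circ b c)
  circ_zero : ∀ a, circ a 0 = a
  zero_circ : ∀ a, circ 0 a = a
  inv_circ : ∀ a, circ (inv a) a = 0
  compat : ∀ a b c, circ a (b + c) + a = circ a b + circ a c

namespace LeftBrace

variable {A : Type*} [AddCommGroup A]

/-- The star operation `a * b = a ∘ b - a - b`. -/
def star (B : LeftBrace A) (a b : A) : A := B.circ a b - a - b

/-- `circPow B a n` is the product `a ∘ a ∘ ⋯ ∘ a` of `n` copies of `a`. -/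
def circPow (B : LeftBrace A) (a : A) : ℕ → A
  | 0 => 0
  | n + 1 => B.circ a (B.circPow a n)

end LeftBrace

/-- The left nilpotency chain: leftChain B i is A^{i+1}, where A^1 = A and
A^{i+1} is generated additively by the elements a * b with b ∈ A^i. -/
def leftChain {A : Type*} [AddCommGroup A] (B : LeftBrace A) : ℕ → AddSubgroup A
  | 0 => ⊤
  | n + 1 => AddSubgroup.closure {x | ∃ a b, b ∈ leftChain B n ∧ x = B.star a b}

/-- The sequence of pairs (d_i, d_i'): d_0 = a, d_0' = b, d_{i+1} = d_i + d_i',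
d_{i+1}' = d_i * d_i'. -/
def dPair {A : Type*} [AddCommGroup A] (B : LeftBrace A) (a b : A) : ℕ → A × A
  | 0 => (a, b)
  | n + 1 => ((dPair B a b n).1 + (dPair B a b n).2,
      B.star (dPair B a b n).1 (dPair B a b n).2)

section Aux
variable {A : Type*} [AddCommGroup A] (B : LeftBrace A)

lemma myCircAdd (a x y : A) : B.circ a (x + y) = B.circ a x + B.circ a y - a :=
  eq_sub_of_add_eq (B.compat a x y)

lemma myCircSub (a x y : A) : B.circ a (x - y) = B.circ a x - B.circ a y + a := by
  have h := myCircAdd B a (x - y) y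
  rw [sub_add_cancel] at h
  rw [h]; abel

lemma myStarZero (a : A) : B.star a 0 = 0 := by
  simp [LeftBrace.star, B.circ_zero]

lemma myZeroStar (a : A) : B.star 0 a = 0 := by
  simp [LeftBrace.star, B.zero_circ]

lemma myCircStar (a b c : A) :
    B.star (B.circ a b) c = B.star a (B.star b c) + B.star a c + B.star b c := by
  simp only [LeftBrace.star]
  rw [B.circ_assoc, myCircSub, myCircSub]
  abel

lemma chainBot {n : ℕ} (h : leftChain B n = ⊥) : leftChain B (n + 1) = ⊥ := by
  rw [leftChain, eq_bot_iff]
  refine (AddSubgroup.closure_le _).mpr ?_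
  rintro x ⟨u, v, hv, rfl⟩
  rw [h, AddSubgroup.mem_bot] at hv
  subst hv
  simp [myStarZero, AddSubgroup.mem_bot]

lemma chainBotGe {n : ℕ} (h : leftChain B n = ⊥) : ∀ k, leftChain B (n + k) = ⊥ := by
  intro k
  induction k with
  | zero => exact h
  | succ k ih => exact chainBot B ih

lemma dMem (a b : A) : ∀ i, (dPair B a b i).2 ∈ leftChain B i := by
  intro i
  induction i with
  | zero => simp [dPair, leftChain]
  | succ n ih =>
    exact AddSubgroup.subset_closure ⟨(dPair B a b n).1, (dPair B a b n).2, ih, rfl⟩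

end Aux


/-- If A is a left brace with A^s = 0 (s ≥ 1), then
(a+b)*c = a*c + b*c + ∑_{i=0}^{2s} (-1)^{i+1}((d_i*d_i')*c - d_i*(d_i'*c)). -/
theorem stmt3 {A : Type*} [AddCommGroup A] (B : LeftBrace A) (s : ℕ) (hs : 0 < s)
    (hnil : leftChain B (s - 1) = ⊥) (a b c : A) :
    B.star (a + b) c = B.star a c + B.star b c +
      ∑ i ∈ Finset.range (2 * s + 1), (-1 : ℤ) ^ (i + 1) •
        (B.star (B.star (dPair B a b i).1 (dPair B a b i).2) c -
          B.star (dPair B a b i).1 (B.star (dPair B a b i).2 c)) := by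
  set T : ℕ → A := fun i =>
    B.star (B.star (dPair B a b i).1 (dPair B a b i).2) c -
      B.star (dPair B a b i).1 (B.star (dPair B a b i).2 c) with hT
  set G : ℕ → A := fun n =>
    B.star ((dPair B a b n).1 + (dPair B a b n).2) c -
      B.star (dPair B a b n).1 c - B.star (dPair B a b n).2 c with hG
  have hGrec : ∀ n, G n + G (n + 1) = -T n := by
    intro n
    have hsum : (dPair B a b (n+1)).1 + (dPair B a b (n+1)).2
        = B.circ (dPair B a b n).1 (dPair B a b n).2 := by
      simp [dPair, LeftBrace.star]
    have h1 : B.star ((dPair B a b (n+1)).1 + (dPair B a b (n+1)).2) c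
        = B.star (dPair B a b n).1 (B.star (dPair B a b n).2 c)
          + B.star (dPair B a b n).1 c + B.star (dPair B a b n).2 c := by
      rw [hsum, myCircStar]
    simp only [hG, hT, h1]
    show _ + (_ - B.star (dPair B a b (n+1)).1 c - B.star (dPair B a b (n+1)).2 c) = _
    simp only [dPair]
    abel
  have key : ∀ n, B.star (a + b) c = B.star a c + B.star b c +
      (∑ i ∈ Finset.range n, (-1 : ℤ) ^ (i + 1) • T i) + (-1 : ℤ) ^ n • G n := by
    intro n
    induction n with
    | zero =>
      simp only [Finset.range_zero, Finset.sum_empty, pow_zero, one_smul, add_zero, hG, dPair]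
      abel
    | succ n ih =>
      have hGn : G n = -T n - G (n + 1) := by
        have := hGrec n; rw [← this]; abel
      rw [Finset.sum_range_succ, ih, hGn]
      have h1 : ((-1 : ℤ)) ^ (n + 1) = -((-1 : ℤ)) ^ n := by ring
      rw [h1, smul_sub, smul_neg, neg_smul, neg_smul]
      abel
  have hdz : (dPair B a b (2 * s + 1)).2 = 0 := by
    have hch : leftChain B (2 * s + 1) = ⊥ := by
      have := chainBotGe B hnil (2 * s + 1 - (s - 1))
      rwa [show s - 1 + (2 * s + 1 - (s - 1)) = 2 * s + 1 by omega] at this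
    have := dMem B a b (2 * s + 1)
    rwa [hch, AddSubgroup.mem_bot] at this
  have hGend : G (2 * s + 1) = 0 := by
    simp [hG, hdz, myStarZero, myZeroStar, add_zero]
  rw [key (2 * s + 1), hGend, smul_zero, add_zero]
end

section
/- Let A be a brace of cardinality p^n with p prime and p > n + 1. Then pA is a subbrace of A which is strongly nilpotent of nilpotency index at most p − 1. -/
/-- StarProdIn B S k x : x is a product (under *, any bracketing) of exactly k
elements of the set S. -/
inductive StarProdIn {A : Type*} [AddCommGroup A] (B : LeftBrace A) (S : Set A) : ℕ → A → Prop
  | base {x : A} : x ∈ S → StarProdIn B S 1 x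
  | mul {i j : ℕ} {x y : A} : StarProdIn B S i x → StarProdIn B S j y →
      StarProdIn B S (i + j) (B.star x y)

/-!
`pA` is closed under `-`, `∘` and inversion because `λ_a = a ∘ · - a` is additive. For the
nilpotency it suffices that `(p ^ k • y) * z ∈ p ^ k A`: then a `*`-product of `p - 1` elements
of `pA` lies in `p ^ (p - 1) A = 0`, as `p - 1 ≥ n`.

Let `Z_0 = 0` and `Z_{t+1} = {m | A * m ⊆ Z_t}`. The `p`-group `(A, ∘)` acts on `A / Z_t` through
`λ` with fixed points `Z_{t+1} / Z_t`, which are nontrivial until `Z_t = A`; hence `Z_n = A`.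
Give `p ^ i • c` with `c ∈ Z_t` the bidegree `(i, i - t)`. By induction on `k`, left
multiplication by `p ^ k • y` raises bidegrees by `(k, k + 1)`. The step from `u` to `p • u` rests
on `u ^∘ p = p • u + p • v` (the coefficients `C(p, j)`, `0 < j < p`, are divisible by `p`, and
`(u *)^(p - 1) u = 0` as `p - 1 > n`) and on a downward induction on the weight of `u`.
-/

lemma sum_range_one_add_pow {R : Type*} [Semiring R] (x : R) (K : ℕ) :
    ∑ m ∈ Finset.range K, (1 + x) ^ m =
      ∑ j ∈ Finset.range K, K.choose (j + 1) • x ^ j := by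
  induction K with
  | zero => simp
  | succ K ih =>
    have hbinom : (1 + x) ^ K = ∑ j ∈ Finset.range (K + 1), K.choose j • x ^ j := by
      rw [add_comm, (Commute.one_right x).add_pow]
      simp only [one_pow, mul_one, nsmul_eq_mul']
    simp only [Finset.sum_range_succ _ K, ih, hbinom, Nat.choose_succ_succ', add_smul,
      Finset.sum_add_distrib, Nat.choose_succ_self, zero_smul, add_zero]
    abel

lemma pow_nsmul_eq_zero_of_card_eq_pow {G : Type*} [AddGroup G] {p n m : ℕ}
    (hcard : Nat.card G = p ^ n) (h : n ≤ m) (y : G) : p ^ m • y = 0 := by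
  rw [← Nat.sub_add_cancel h, pow_add, mul_nsmul, ← hcard, card_nsmul_eq_zero']

lemma AddSubgroup.prime_mul_card_le_card_of_lt {G : Type*} [AddGroup G] {p n : ℕ}
    (hp : p.Prime) (hcard : Nat.card G = p ^ n) {H K : AddSubgroup G} (hHK : H < K) :
    p * Nat.card H ≤ Nat.card K := by
  have hK : Nat.card K = Nat.card H * H.relIndex K := by
    rw [← relIndex_bot_left, ← relIndex_bot_left, relIndex_mul_relIndex _ _ _ bot_le hHK.le]
  obtain ⟨k, -, hk⟩ := (Nat.dvd_prime_pow hp).mp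
    (hcard ▸ (relIndex_dvd_card H K).trans (card_addSubgroup_dvd_card K))
  have hk0 : k ≠ 0 := by
    rintro rfl
    exact hHK.not_ge (relIndex_eq_one.mp (by rw [hk, pow_zero]))
  rw [hK, hk, mul_comm]
  exact Nat.mul_le_mul_left _ (Nat.le_self_pow hk0 p)

namespace LeftBrace

variable {A : Type*} [AddCommGroup A] (B : LeftBrace A)

def CircGroup (_ : LeftBrace A) : Type _ := A

instance : Group B.CircGroup where
  mul := B.circ
  mul_assoc := B.circ_assoc
  one := (0 : A)
  one_mul := B.zero_circ
  mul_one := B.circ_zero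
  inv := B.inv
  inv_mul_cancel := B.inv_circ

lemma circ_inv (a : A) : B.circ a (B.inv a) = 0 :=
  mul_inv_cancel (G := B.CircGroup) a

def lam (x : A) : Module.End ℤ A :=
  (AddMonoidHom.mk' (fun c => B.circ x c - x) fun b c => by
    rw [sub_add_sub_comm, ← B.compat]; abel).toIntLinearMap

lemma lam_apply (x c : A) : B.lam x c = B.circ x c - x := rfl

lemma circ_eq_add_lam (x c : A) : B.circ x c = x + B.lam x c := by
  rw [lam_apply]; abel

lemma lam_zero : B.lam 0 = 1 :=
  LinearMap.ext fun c => by simp [lam_apply, B.zero_circ]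

lemma lam_circ (x y : A) : B.lam (B.circ x y) = B.lam x * B.lam y :=
  LinearMap.ext fun c => by
    simp only [Module.End.mul_apply, lam_apply, map_sub, B.circ_assoc]
    abel

def starLeft (x : A) : Module.End ℤ A := B.lam x - 1

lemma starLeft_apply (x c : A) : B.starLeft x c = B.star x c := rfl

lemma starLeft_zero : B.starLeft 0 = 0 := by
  rw [starLeft, lam_zero, sub_self]

lemma lam_eq_one_add_starLeft (x : A) : B.lam x = 1 + B.starLeft x := by
  rw [starLeft, add_sub_cancel]

lemma circ_nsmul_nsmul (p : ℕ) (a b : A) :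
    B.circ (p • a) (p • b) = p • (a + B.lam (p • a) b) := by
  rw [circ_eq_add_lam, map_nsmul, smul_add]

lemma inv_nsmul (p : ℕ) (a : A) : B.inv (p • a) = p • -B.lam (B.inv (p • a)) a := by
  have h := B.inv_circ (p • a)
  rw [circ_eq_add_lam, map_nsmul] at h
  rw [smul_neg]
  exact eq_neg_of_add_eq_zero_left h

lemma inv_circ_eq_lam_sub (a b : A) : B.circ (B.inv b) a = B.lam (B.inv b) (a - b) := by
  rw [map_sub, lam_apply, lam_apply, B.inv_circ]; abel

lemma star_eq_lam_star_add (a b c : A) :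
    B.star a c = B.lam b (B.star (B.circ (B.inv b) a) c) + B.star b c := by
  have hab : B.circ b (B.circ (B.inv b) a) = a := by
    rw [← B.circ_assoc, circ_inv, B.zero_circ]
  conv_lhs => rw [← hab]
  simp only [← starLeft_apply, starLeft, LinearMap.sub_apply, lam_circ, Module.End.mul_apply,
    Module.End.one_apply, map_sub]
  abel

lemma circPow_eq_sum_lam_pow (u : A) (K : ℕ) :
    B.circPow u K = ∑ m ∈ Finset.range K, (B.lam u ^ m) u := by
  induction K with
  | zero => rfl
  | succ K ih =>
    rw [circPow, circ_eq_add_lam, ih, map_sum, Finset.sum_range_succ', add_comm]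
    simp [pow_succ']

lemma circPow_eq_sum_choose (u : A) (K : ℕ) :
    B.circPow u K = ∑ j ∈ Finset.range K, K.choose (j + 1) • (B.starLeft u ^ j) u := by
  rw [circPow_eq_sum_lam_pow, ← LinearMap.sum_apply, lam_eq_one_add_starLeft,
    sum_range_one_add_pow, LinearMap.sum_apply]
  rfl

lemma lam_circPow (u : A) (K : ℕ) : B.lam (B.circPow u K) = B.lam u ^ K := by
  induction K with
  | zero => exact B.lam_zero
  | succ K ih => rw [circPow, lam_circ, ih, pow_succ']

lemma star_circPow_eq_sum (u c : A) (K : ℕ) :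
    B.star (B.circPow u K) c =
      ∑ m ∈ Finset.range K, K.choose (m + 1) • (B.starLeft u ^ (m + 1)) c := by
  rw [← starLeft_apply, starLeft, LinearMap.sub_apply, lam_circPow, lam_eq_one_add_starLeft,
    add_comm, (Commute.one_right _).add_pow, Finset.sum_range_succ']
  simp [LinearMap.sum_apply, Module.End.natCast_apply]

lemma exists_circPow_prime_eq {p : ℕ} (hp : p.Prime) (u : A)
    (hu : (B.starLeft u ^ (p - 1)) u = 0) (H : AddSubgroup A)
    (hH : ∀ j, (B.starLeft u ^ (j + 1)) u ∈ H) :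
    ∃ v ∈ H, B.circPow u p = p • u + p • v := by
  -- The division is exact except in the last term, where `p.choose p / p = 0` and `hu` applies.
  refine ⟨∑ j ∈ Finset.range (p - 1), (p.choose (j + 2) / p) • (B.starLeft u ^ (j + 1)) u,
    H.sum_mem fun j _ => H.nsmul_mem (hH j) _, ?_⟩
  obtain ⟨q, rfl⟩ : ∃ q, p = q + 1 := ⟨p - 1, (Nat.sub_add_cancel hp.one_le).symm⟩
  rw [circPow_eq_sum_choose, Finset.sum_range_succ', Finset.smul_sum, add_comm]
  simp only [zero_add, Nat.choose_one_right, pow_zero, Module.End.one_apply]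
  rw [Nat.add_sub_cancel] at hu
  refine congrArg _ (Finset.sum_congr rfl fun j hj => ?_)
  rw [Finset.mem_range] at hj
  rw [smul_smul]
  rcases Nat.lt_or_ge (j + 2) (q + 1) with hjq | hjq
  · rw [Nat.mul_div_cancel' (hp.dvd_choose_self (by omega) hjq)]
  · rw [show j + 1 = q by omega, hu, smul_zero, smul_zero]

def fixSeries : ℕ → AddSubgroup A
  | 0 => ⊥
  | j + 1 => ⨅ x, (fixSeries j).comap (B.starLeft x).toAddMonoidHom

@[simp] lemma fixSeries_zero : B.fixSeries 0 = ⊥ := rfl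

lemma mem_fixSeries_succ {j : ℕ} {m : A} :
    m ∈ B.fixSeries (j + 1) ↔ ∀ x, B.star x m ∈ B.fixSeries j := by
  simp [fixSeries, AddSubgroup.mem_iInf, starLeft_apply]

lemma fixSeries_mono : Monotone B.fixSeries := by
  refine monotone_nat_of_le_succ fun j => ?_
  induction j with
  | zero => exact bot_le
  | succ j ih =>
    exact fun m hm => B.mem_fixSeries_succ.mpr fun x => ih (B.mem_fixSeries_succ.mp hm x)

lemma star_mem_fixSeries {t : ℕ} {m : A} (hm : m ∈ B.fixSeries t) (x : A) :
    B.star x m ∈ B.fixSeries (t - 1) := by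
  cases t with
  | zero =>
    rw [fixSeries_zero, AddSubgroup.mem_bot] at hm
    rw [hm, ← starLeft_apply, map_zero]
    exact zero_mem _
  | succ t => exact B.mem_fixSeries_succ.mp hm x

lemma lam_mem_fixSeries {t : ℕ} {m : A} (hm : m ∈ B.fixSeries t) (x : A) :
    B.lam x m ∈ B.fixSeries t := by
  rw [lam_eq_one_add_starLeft, LinearMap.add_apply, Module.End.one_apply, starLeft_apply]
  exact add_mem hm (B.fixSeries_mono (Nat.sub_le t 1) (B.star_mem_fixSeries hm x))

lemma starLeft_pow_mem_fixSeries {t : ℕ} {m : A} (hm : m ∈ B.fixSeries t) (u : A) (j : ℕ) :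
    (B.starLeft u ^ j) m ∈ B.fixSeries (t - j) := by
  induction j with
  | zero => exact hm
  | succ j ih =>
    rw [pow_succ', Module.End.mul_apply, starLeft_apply, ← Nat.sub_sub]
    exact B.star_mem_fixSeries ih u

abbrev lamQuotientAction (N : AddSubgroup A) (hN : ∀ x, N ≤ N.comap (B.lam x).toAddMonoidHom) :
    MulAction B.CircGroup (A ⧸ N) where
  smul g := QuotientAddGroup.map N N (B.lam g).toAddMonoidHom (hN g)
  one_smul q := by
    induction q using QuotientAddGroup.induction_on with
    | H m =>
      change QuotientAddGroup.map N N (B.lam 0).toAddMonoidHom (hN 0) m = m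
      simp [lam_zero]
  mul_smul g h q := by
    induction q using QuotientAddGroup.induction_on with
    | H m =>
      change QuotientAddGroup.map N N (B.lam (B.circ g h)).toAddMonoidHom _ m =
        QuotientAddGroup.map N N (B.lam g).toAddMonoidHom _
          (QuotientAddGroup.map N N (B.lam h).toAddMonoidHom _ m)
      simpa using congrArg QuotientAddGroup.mk (LinearMap.congr_fun (B.lam_circ g h) m)

lemma exists_notMem_forall_star_mem [Finite A] {p n : ℕ} (hp : p.Prime)
    (hcard : Nat.card A = p ^ n) (N : AddSubgroup A)
    (hN : ∀ x, N ≤ N.comap (B.lam x).toAddMonoidHom) (hNtop : N ≠ ⊤) :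
    ∃ m ∉ N, ∀ x, B.star x m ∈ N := by
  have := Fact.mk hp
  let := B.lamQuotientAction N hN
  have hdvd : p ∣ Nat.card (A ⧸ N) := by
    obtain ⟨k, -, hk⟩ := (Nat.dvd_prime_pow hp).mp (hcard ▸ N.index_dvd_card)
    have hk0 : k ≠ 0 := by
      rintro rfl
      exact hNtop (AddSubgroup.index_eq_one.mp (by rw [hk, pow_zero]))
    change p ∣ N.index
    exact hk ▸ dvd_pow_self p hk0
  have hG : IsPGroup p B.CircGroup := IsPGroup.of_card hcard
  obtain ⟨q, hq, hq0⟩ := hG.exists_fixed_point_of_prime_dvd_card_of_fixed_point (A ⧸ N) hdvd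
    (a := 0) fun g => map_zero _
  obtain ⟨m, rfl⟩ := QuotientAddGroup.mk_surjective q
  refine ⟨m, fun hm => hq0 ((QuotientAddGroup.eq_zero_iff m).mpr hm).symm, fun x => ?_⟩
  have hx : (QuotientAddGroup.mk (B.lam x m) : A ⧸ N) = QuotientAddGroup.mk m :=
    hq (x : B.CircGroup)
  rw [← starLeft_apply, starLeft, LinearMap.sub_apply, Module.End.one_apply]
  exact QuotientAddGroup.eq_iff_sub_mem.mp hx

lemma fixSeries_eq_top [Finite A] {p n : ℕ} (hp : p.Prime) (hcard : Nat.card A = p ^ n) :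
    B.fixSeries n = ⊤ := by
  have hgrow : ∀ j, B.fixSeries j = ⊤ ∨ p ^ j ≤ Nat.card (B.fixSeries j) := by
    intro j
    induction j with
    | zero => exact .inr (by simp)
    | succ j ih =>
      by_cases htop : B.fixSeries j = ⊤
      · exact .inl (top_le_iff.mp (htop ▸ B.fixSeries_mono j.le_succ))
      obtain ⟨m, hm, hstar⟩ := B.exists_notMem_forall_star_mem hp hcard _
        (fun x _ hc => B.lam_mem_fixSeries hc x) htop
      have hlt : B.fixSeries j < B.fixSeries (j + 1) :=
        lt_of_le_not_ge (B.fixSeries_mono j.le_succ) fun h =>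
          hm (h (B.mem_fixSeries_succ.mpr hstar))
      refine .inr ?_
      rw [pow_succ']
      exact (Nat.mul_le_mul_left p (ih.resolve_left htop)).trans
        (AddSubgroup.prime_mul_card_le_card_of_lt hp hcard hlt)
  exact (hgrow n).elim id fun h => AddSubgroup.eq_top_of_le_card _ (hcard ▸ h)

def filtration (p k : ℕ) (w : ℤ) : AddSubgroup A :=
  AddSubgroup.closure
    {z | ∃ i t : ℕ, k ≤ i ∧ w + t ≤ i ∧ ∃ c ∈ B.fixSeries t, p ^ i • c = z}

variable {B} {p : ℕ}

lemma pow_nsmul_mem_filtration {k i t : ℕ} {w : ℤ} {c : A} (hc : c ∈ B.fixSeries t)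
    (hk : k ≤ i) (hw : w + t ≤ i) : p ^ i • c ∈ B.filtration p k w :=
  AddSubgroup.subset_closure ⟨i, t, hk, hw, c, hc, rfl⟩

lemma mem_filtration_of_mem_fixSeries {t : ℕ} {c : A} (hc : c ∈ B.fixSeries t) :
    c ∈ B.filtration p 0 (-t) := by
  simpa using pow_nsmul_mem_filtration (p := p) (k := 0) (i := 0) (w := -t) hc le_rfl (by simp)

lemma map_mem_filtration {k k' : ℕ} {w w' : ℤ} (f : A →+ A)
    (hf : ∀ i t : ℕ, k ≤ i → w + t ≤ i → ∀ c ∈ B.fixSeries t,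
      f (p ^ i • c) ∈ B.filtration p k' w')
    {z : A} (hz : z ∈ B.filtration p k w) : f z ∈ B.filtration p k' w' :=
  (AddSubgroup.closure_le ((B.filtration p k' w').comap f)).mpr
    (by rintro _ ⟨i, t, hk, hw, c, hc, rfl⟩; exact hf i t hk hw c hc) hz

-- A generator `p ^ i • c` of `filtration p k w` has `i ≥ w + t ≥ w`.
lemma filtration_le_filtration {k k' : ℕ} {w w' : ℤ} (hk : (k' : ℤ) ≤ max (k : ℤ) w)
    (hw : w' ≤ w) : B.filtration p k w ≤ B.filtration p k' w' := fun _ hz =>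
  map_mem_filtration (AddMonoidHom.id A)
    (fun _ _ hki hwi _ hc => pow_nsmul_mem_filtration hc (by omega) (by omega)) hz

lemma pow_nsmul_mem_filtration_add {k : ℕ} {w : ℤ} {z : A} (hz : z ∈ B.filtration p k w)
    (j : ℕ) :
    p ^ j • z ∈ B.filtration p (k + j) (w + j) :=
  map_mem_filtration (nsmulAddMonoidHom (p ^ j)) (fun i _ hki hwi _ hc => by
    rw [nsmulAddMonoidHom_apply, smul_smul, ← pow_add]
    exact pow_nsmul_mem_filtration hc (by omega) (by push_cast; omega)) hz

lemma lam_mem_filtration {k : ℕ} {w : ℤ} {z : A} (hz : z ∈ B.filtration p k w) (x : A) :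
    B.lam x z ∈ B.filtration p k w :=
  map_mem_filtration (B.lam x).toAddMonoidHom (fun _ _ hki hwi _ hc => by
    rw [LinearMap.toAddMonoidHom_coe, map_nsmul]
    exact pow_nsmul_mem_filtration (B.lam_mem_fixSeries hc x) hki hwi) hz

lemma exists_pow_nsmul_eq_of_mem_filtration {k : ℕ} {w : ℤ} {z : A}
    (hz : z ∈ B.filtration p k w) : ∃ y, p ^ k • y = z :=
  (AddSubgroup.closure_le (nsmulAddMonoidHom (α := A) (p ^ k)).range).mpr (by
    rintro _ ⟨i, t, hki, -, c, -, rfl⟩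
    exact ⟨p ^ (i - k) • c, by rw [nsmulAddMonoidHom_apply, smul_smul, ← pow_add,
      Nat.add_sub_cancel' hki]⟩) hz

lemma filtration_eq_bot {n k : ℕ} {w : ℤ} (hcard : Nat.card A = p ^ n) (hw : n ≤ w) :
    B.filtration p k w = ⊥ := by
  refine (AddSubgroup.eq_bot_iff_forall _).mpr fun z hz => ?_
  obtain ⟨y, rfl⟩ := exists_pow_nsmul_eq_of_mem_filtration
    (filtration_le_filtration (k' := n) (by omega) le_rfl hz)
  exact pow_nsmul_eq_zero_of_card_eq_pow hcard le_rfl y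

def StarShifts (B : LeftBrace A) (p k : ℕ) (w : ℤ) (u : A) : Prop :=
  ∀ t : ℕ, ∀ c ∈ B.fixSeries t, B.star u c ∈ B.filtration p k (w - t)

lemma starShifts_zero_one (u : A) : B.StarShifts p 0 1 u := by
  rintro (_ | t) c hc
  · rw [fixSeries_zero, AddSubgroup.mem_bot] at hc
    rw [hc, ← starLeft_apply, map_zero]
    exact zero_mem _
  · convert mem_filtration_of_mem_fixSeries (p := p) (B.mem_fixSeries_succ.mp hc u) using 2
    push_cast
    ring

namespace StarShifts

variable {k : ℕ} {w : ℤ} {u : A}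

lemma star_mem_filtration (hu : B.StarShifts p k w u) {k' : ℕ} {w' : ℤ} {z : A}
    (hz : z ∈ B.filtration p k' w') : B.star u z ∈ B.filtration p (k + k') (w + w') := by
  rw [← starLeft_apply]
  refine map_mem_filtration (B.starLeft u).toAddMonoidHom (fun i t hki hwi c hc => ?_) hz
  rw [LinearMap.toAddMonoidHom_coe, map_nsmul, starLeft_apply]
  exact filtration_le_filtration (by omega) (by omega)
    (pow_nsmul_mem_filtration_add (hu t c hc) i)

lemma pow_apply_mem_filtration (hu : B.StarShifts p k w u) {k' : ℕ} {w' : ℤ} {z : A}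
    (hz : z ∈ B.filtration p k' w') (m : ℕ) :
    (B.starLeft u ^ m) z ∈ B.filtration p (m * k + k') (m * w + w') := by
  induction m with
  | zero => simpa using hz
  | succ m ih =>
    rw [pow_succ', Module.End.mul_apply, starLeft_apply]
    convert hu.star_mem_filtration ih using 2 <;> push_cast <;> ring

lemma of_forall_le {n : ℕ} (htop : B.fixSeries n = ⊤)
    (h : ∀ t ≤ n, ∀ c ∈ B.fixSeries t, B.star u c ∈ B.filtration p k (w - t)) :
    B.StarShifts p k w u := by
  intro t c hc
  rcases le_or_gt t n with ht | ht
  · exact h t ht c hc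
  · exact filtration_le_filtration (le_max_left _ _) (by omega)
      (h n le_rfl c (htop ▸ AddSubgroup.mem_top c))

lemma star_circPow_prime_mem_filtration (hp : p.Prime) (hu : B.StarShifts p k (k + 1) u) {t : ℕ}
    (ht : t < p) {c : A} (hc : c ∈ B.fixSeries t) :
    B.star (B.circPow u p) c ∈ B.filtration p (k + 1) (k + 2 - t) := by
  rw [star_circPow_eq_sum]
  refine AddSubgroup.sum_mem _ fun m hm => ?_
  have hS := hu.pow_apply_mem_filtration (mem_filtration_of_mem_fixSeries hc) (m + 1)
  have hk : k ≤ (m + 1) * k := Nat.le_mul_of_pos_left k m.succ_pos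
  rcases Nat.lt_or_ge (m + 1) p with hmp | hmp
  · obtain ⟨d, hd⟩ := hp.dvd_choose_self m.succ_ne_zero hmp
    rw [hd, mul_nsmul']
    have := pow_nsmul_mem_filtration_add (AddSubgroup.nsmul_mem _ hS d) 1
    rw [pow_one] at this
    refine filtration_le_filtration (le_max_of_le_left ?_) ?_ this <;> push_cast <;> nlinarith
  · obtain rfl : m + 1 = p := by rw [Finset.mem_range] at hm; omega
    rw [Nat.choose_self, one_smul]
    have := hp.two_le
    refine filtration_le_filtration (le_max_of_le_right ?_) ?_ hS <;> push_cast <;> nlinarith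

end StarShifts

section PrimePower

variable [Finite A] {n k : ℕ}

/- With `b = u ^∘ p = p • u + p • v`, one has `p • u = b ∘ (p • ρ)` where `ρ = -λ_{b⁻¹} v` lies
deeper in the filtration than `u`, and `(p • u) * c = λ_b ((p • ρ) * c) + b * c`. -/
lemma starShifts_nsmul_of_forall_mem_filtration_add_one (hp : p.Prime) (hpn : n + 1 < p)
    (hcard : Nat.card A = p ^ n) (hk : ∀ y : A, B.StarShifts p k (k + 1) (p ^ k • y)) {w : ℤ}
    (hw : ∀ u ∈ B.filtration p k (w + 1), B.StarShifts p (k + 1) (k + 2) (p • u))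
    {u : A} (hu : u ∈ B.filtration p k w) : B.StarShifts p (k + 1) (k + 2) (p • u) := by
  have htop := B.fixSeries_eq_top hp hcard
  have hushift : B.StarShifts p k (k + 1) u := by
    obtain ⟨y, rfl⟩ := exists_pow_nsmul_eq_of_mem_filtration hu
    exact hk y
  set b := B.circPow u p
  obtain ⟨v, hv, hb⟩ : ∃ v ∈ B.filtration p k (w + 1), b = p • u + p • v := by
    refine B.exists_circPow_prime_eq hp u ?_ _ fun j => ?_
    · have := B.starLeft_pow_mem_fixSeries (htop ▸ AddSubgroup.mem_top u) u (p - 1)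
      rwa [show n - (p - 1) = 0 by omega, fixSeries_zero, AddSubgroup.mem_bot] at this
    · refine filtration_le_filtration (le_max_of_le_left ?_) ?_
        (hushift.pow_apply_mem_filtration hu (j + 1)) <;> push_cast <;> nlinarith
  have hinv : B.circ (B.inv b) (p • u) = p • -B.lam (B.inv b) v := by
    rw [inv_circ_eq_lam_sub, hb, sub_add_cancel_left, map_neg, map_nsmul, smul_neg]
  refine StarShifts.of_forall_le htop fun t ht c hc => ?_
  rw [B.star_eq_lam_star_add _ b, hinv]
  exact add_mem (lam_mem_filtration (hw _ (neg_mem (lam_mem_filtration hv _)) t c hc) _)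
    (hushift.star_circPow_prime_mem_filtration hp (by omega) hc)

lemma starShifts_nsmul_of_mem_filtration (hp : p.Prime) (hpn : n + 1 < p)
    (hcard : Nat.card A = p ^ n) (hk : ∀ y : A, B.StarShifts p k (k + 1) (p ^ k • y)) {w : ℤ}
    {u : A} (hu : u ∈ B.filtration p k w) : B.StarShifts p (k + 1) (k + 2) (p • u) := by
  suffices h : ∀ d : ℕ, ∀ w : ℤ, n ≤ w + d → ∀ u ∈ B.filtration p k w,
      B.StarShifts p (k + 1) (k + 2) (p • u) from h (n - w).toNat w (by omega) u hu
  intro d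
  induction d with
  | zero =>
    intro w hw u hu
    rw [filtration_eq_bot hcard (by simpa using hw), AddSubgroup.mem_bot] at hu
    intro t c _
    rw [hu, smul_zero, ← starLeft_apply, starLeft_zero, LinearMap.zero_apply]
    exact zero_mem _
  | succ d ih =>
    exact fun w hw u hu => starShifts_nsmul_of_forall_mem_filtration_add_one hp hpn hcard hk
      (ih (w + 1) (by push_cast at hw; omega)) hu

lemma starShifts_pow_nsmul (hp : p.Prime) (hpn : n + 1 < p) (hcard : Nat.card A = p ^ n)
    (k : ℕ) (y : A) : B.StarShifts p k (k + 1) (p ^ k • y) := by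
  induction k generalizing y with
  | zero => exact starShifts_zero_one _
  | succ k ih =>
    have hy : p ^ k • y ∈ B.filtration p k (k - n) :=
      pow_nsmul_mem_filtration (B.fixSeries_eq_top hp hcard ▸ AddSubgroup.mem_top y) le_rfl
        (by omega)
    rw [pow_succ', mul_nsmul']
    convert starShifts_nsmul_of_mem_filtration hp hpn hcard ih hy using 1
    push_cast
    ring

lemma exists_pow_nsmul_eq_star (hp : p.Prime) (hpn : n + 1 < p) (hcard : Nat.card A = p ^ n)
    (k : ℕ) (y z : A) : ∃ x, p ^ k • x = B.star (p ^ k • y) z :=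
  exists_pow_nsmul_eq_of_mem_filtration <| starShifts_pow_nsmul hp hpn hcard k y n z
    (B.fixSeries_eq_top hp hcard ▸ AddSubgroup.mem_top z)

end PrimePower

end LeftBrace

lemma StarProdIn.exists_pow_nsmul_eq {A : Type*} [AddCommGroup A] [Finite A] {B : LeftBrace A}
    {p n : ℕ} (hp : p.Prime) (hpn : n + 1 < p) (hcard : Nat.card A = p ^ n) {k : ℕ} {z : A}
    (h : StarProdIn B (Set.range (fun a : A => p • a)) k z) : ∃ y, p ^ k • y = z := by
  induction h with
  | base hx =>
    obtain ⟨a, rfl⟩ := hx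
    exact ⟨a, by rw [pow_one]⟩
  | @mul i j _ _ _ _ ih₁ ih₂ =>
    obtain ⟨y₁, rfl⟩ := ih₁
    obtain ⟨y₂, rfl⟩ := ih₂
    obtain ⟨x, hx⟩ := B.exists_pow_nsmul_eq_star hp hpn hcard i y₁ y₂
    refine ⟨x, ?_⟩
    rw [← LeftBrace.starLeft_apply, map_nsmul, LeftBrace.starLeft_apply, ← hx, smul_smul,
      ← pow_add, add_comm]

/-- Let A be a brace of cardinality p^n, p prime, p > n + 1. Then pA is a subbrace of A
(closed under subtraction, ∘ and inverses) which is strongly nilpotent of nilpotency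
index at most p - 1, i.e. every product of p - 1 elements of pA vanishes. -/
theorem stmt6 {A : Type*} [AddCommGroup A] [Fintype A] (B : LeftBrace A) (p n : ℕ)
    (hp : p.Prime) (hpn : n + 1 < p) (hcard : Fintype.card A = p ^ n) :
    (∀ x ∈ Set.range (fun a : A => p • a), ∀ y ∈ Set.range (fun a : A => p • a),
        x - y ∈ Set.range (fun a : A => p • a)) ∧
    (∀ x ∈ Set.range (fun a : A => p • a), ∀ y ∈ Set.range (fun a : A => p • a),
        B.circ x y ∈ Set.range (fun a : A => p • a)) ∧
    (∀ x ∈ Set.range (fun a : A => p • a), B.inv x ∈ Set.range (fun a : A => p • a)) ∧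
    (∀ x : A, StarProdIn B (Set.range (fun a : A => p • a)) (p - 1) x → x = 0) := by
  have hcard' : Nat.card A = p ^ n := Nat.card_eq_fintype_card.trans hcard
  refine ⟨?_, ?_, ?_, fun x hx => ?_⟩
  · rintro _ ⟨a, rfl⟩ _ ⟨b, rfl⟩
    exact ⟨a - b, smul_sub p a b⟩
  · rintro _ ⟨a, rfl⟩ _ ⟨b, rfl⟩
    exact ⟨_, (B.circ_nsmul_nsmul p a b).symm⟩
  · rintro _ ⟨a, rfl⟩
    exact ⟨_, (B.inv_nsmul p a).symm⟩
  · obtain ⟨y, rfl⟩ := hx.exists_pow_nsmul_eq hp hpn hcard'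
    exact pow_nsmul_eq_zero_of_card_eq_pow hcard' (by omega) y
end

section
/- Let p be a prime, n < p − 1 a natural number, and let (A,+,∘) be an F_p-brace of cardinality p^n. Let a ∈ A, a ≠ 0, with a^{∘p} = 0 (a has order p in (A,∘)). Then the set {b ∈ A : a * b = 0} has at least p^{n/p} elements. -/
namespace AddMonoidHom

variable {G H K : Type*} [AddGroup G] [AddGroup H] [AddGroup K]

theorem card_ker_comp_le [Finite G] [Finite H] (T : G →+ H) (S : H →+ K) :
    Nat.card (S.comp T).ker ≤ Nat.card T.ker * Nat.card S.ker := by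
  -- `T` maps `ker (S ∘ T)` into `ker S`, and the kernel of this restriction lies in `ker T`.
  let φ : (S.comp T).ker →+ S.ker :=
    (T.comp (S.comp T).ker.subtype).codRestrict S.ker fun x => x.2
  have hker : Nat.card φ.ker ≤ Nat.card T.ker := by
    refine Nat.card_le_card_of_injective (fun x => ⟨x.1.1, congrArg Subtype.val x.2⟩) ?_
    intro x y h
    have h' : x.1.1 = y.1.1 := congrArg (fun z : T.ker => (z : G)) h
    exact Subtype.ext (Subtype.ext h')
  calc Nat.card (S.comp T).ker = Nat.card φ.ker * Nat.card φ.range := by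
        rw [← AddSubgroup.index_ker, AddSubgroup.card_mul_index]
    _ ≤ Nat.card T.ker * Nat.card S.ker :=
        Nat.mul_le_mul hker (AddSubgroup.card_le_card_addGroup _)

end AddMonoidHom

theorem AddMonoid.End.card_ker_pow_le {A : Type*} [AddGroup A] [Finite A]
    (T : AddMonoid.End A) (k : ℕ) :
    Nat.card (AddMonoidHom.ker (T ^ k)) ≤ Nat.card (AddMonoidHom.ker T) ^ k := by
  induction k with
  | zero =>
    rw [pow_zero, pow_zero]
    exact Finite.card_le_one_iff_subsingleton.mpr ⟨fun x y => Subtype.ext (x.2.trans y.2.symm)⟩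
  | succ k ih =>
    calc Nat.card (AddMonoidHom.ker (T ^ (k + 1)))
        ≤ Nat.card (AddMonoidHom.ker T) * Nat.card (AddMonoidHom.ker (T ^ k)) := by
          rw [pow_succ]
          exact AddMonoidHom.card_ker_comp_le T (T ^ k)
      _ ≤ Nat.card (AddMonoidHom.ker T) ^ (k + 1) := by
          rw [pow_succ']
          exact Nat.mul_le_mul_left _ ih

theorem sub_one_pow_eq_zero_of_pow_eq_one {R : Type*} [Ring R] {p : ℕ} (hp : p.Prime)
    (hpR : (p : R) = 0) {x : R} (hx : x ^ p = 1) : (x - 1) ^ p = 0 := by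
  have h := (Commute.one_right (x - 1)).add_pow_prime_eq hp
  rw [sub_add_cancel, hx, one_pow, hpR, zero_mul, zero_mul, zero_mul, add_zero] at h
  exact left_eq_add.mp (h.trans (add_comm _ _))

theorem Real.rpow_div_le_of_pow_le_pow {x y : ℝ} (hx : 0 ≤ x) (hy : 0 ≤ y) {n k : ℕ}
    (hk : k ≠ 0) (h : x ^ n ≤ y ^ k) : x ^ ((n : ℝ) / k) ≤ y :=
  calc x ^ ((n : ℝ) / k) = (x ^ n) ^ (k⁻¹ : ℝ) := by rw [div_eq_mul_inv, Real.rpow_natCast_mul hx]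
    _ ≤ (y ^ k) ^ (k⁻¹ : ℝ) := by gcongr
    _ = y := Real.pow_rpow_inv_natCast hy hk

namespace LeftBrace

variable {A : Type*} [AddCommGroup A] (B : LeftBrace A)

theorem circ_add (a b c : A) : B.circ a (b + c) = B.circ a b + B.circ a c - a :=
  eq_sub_of_add_eq (B.compat a b c)

def lambda (a : A) : AddMonoid.End A :=
  AddMonoidHom.mk' (fun b => B.circ a b - a) fun b c => by
    rw [circ_add]
    abel

theorem lambda_apply (a b : A) : B.lambda a b = B.circ a b - a := rfl

theorem lambda_zero : B.lambda 0 = 1 := by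
  ext b
  simp [lambda_apply, B.zero_circ]

theorem lambda_circ (a b : A) : B.lambda (B.circ a b) = B.lambda a * B.lambda b := by
  ext c
  have h := B.circ_add a (B.circ b c - b) b
  rw [sub_add_cancel] at h
  rw [AddMonoid.End.coe_mul, Function.comp_apply, lambda_apply, lambda_apply, lambda_apply,
    B.circ_assoc, h]
  abel

theorem lambda_circPow (a : A) (k : ℕ) : B.lambda (B.circPow a k) = B.lambda a ^ k := by
  induction k with
  | zero => exact B.lambda_zero
  | succ k ih => rw [circPow, lambda_circ, ih, pow_succ']

theorem star_eq_lambda_sub_one (a b : A) : B.star a b = (B.lambda a - 1) b := rfl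

end LeftBrace

theorem stmt15_general {A : Type*} [AddCommGroup A] [Fintype A] (B : LeftBrace A) (p n : ℕ)
    (hp : p.Prime) (hcard : Fintype.card A = p ^ n)
    (helem : ∀ a : A, p • a = 0)
    (a : A) (hap : B.circPow a p = 0) :
    (p : ℝ) ^ ((n : ℝ) / p) ≤ Nat.card {b : A // B.star a b = 0} := by
  set T := B.lambda a - 1
  have hpEnd : (p : AddMonoid.End A) = 0 := AddMonoidHom.ext helem
  have hTp : T ^ p = 0 := sub_one_pow_eq_zero_of_pow_eq_one hp hpEnd
    (by rw [← B.lambda_circPow, hap, B.lambda_zero])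
  have hker : Nat.card {b : A // B.star a b = 0} = Nat.card (AddMonoidHom.ker T) :=
    Nat.card_congr (Equiv.subtypeEquivRight fun b => by
      rw [B.star_eq_lambda_sub_one]
      rfl)
  have hcount : p ^ n ≤ Nat.card {b : A // B.star a b = 0} ^ p := by
    calc p ^ n = Nat.card (AddMonoidHom.ker (T ^ p)) := by
          have hall : AddMonoidHom.ker (T ^ p) = ⊤ := by
            rw [hTp]
            exact eq_top_iff.mpr fun x _ => rfl
          rw [hall, AddSubgroup.card_top, Nat.card_eq_fintype_card, hcard]
      _ ≤ _ := hker ▸ T.card_ker_pow_le p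
  exact Real.rpow_div_le_of_pow_le_pow (Nat.cast_nonneg p) (Nat.cast_nonneg _) hp.ne_zero
    (by exact_mod_cast hcount)

/-- Let p be prime, n < p - 1, and A an F_p-brace of cardinality p^n (its additive
group is elementary abelian).  If a ≠ 0 has order p in (A, ∘), then the set
{b | a * b = 0} has at least p^{n/p} elements. -/
theorem stmt15 {A : Type*} [AddCommGroup A] [Fintype A] (B : LeftBrace A) (p n : ℕ)
    (hp : p.Prime) (hn : n < p - 1) (hcard : Fintype.card A = p ^ n)
    (helem : ∀ a : A, p • a = 0)
    (a : A) (ha : a ≠ 0) (hap : B.circPow a p = 0) :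
    (p : ℝ) ^ ((n : ℝ) / p) ≤ Nat.card {b : A // B.star a b = 0} :=
  stmt15_general B p n hp hcard helem a hap
end
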